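/- Suppose Y and X are conditionally independent given BᵀX. Then for each fixed 0 < τ < 1 the conditional expectile f_τ(X) is conditionally independent of X given BᵀX. -/

import Mathlib

open MeasureTheory ProbabilityTheory Matrix

/-- The asymmetric squared-error loss `φ_τ`. -/
noncomputable def phiLoss (τ c : ℝ) : ℝ := if c ≤ 0 then (1 - τ) * c ^ 2 else τ * c ^ 2

/-- `a` is the `τ`-th expectile of the measure `ν`: it is the unique minimizer of the
asymmetric squared-error risk `b ↦ ∫ φ_τ(y - b) ν(dy)`. -/
def IsExpectile (τ : ℝ) (ν : MeasureTheory.Measure ℝ) (a : ℝ) : Prop :=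
  ∀ b : ℝ, b ≠ a → ∫ y, phiLoss τ (y - a) ∂ν < ∫ y, phiLoss τ (y - b) ∂ν

/-!
Write `Z = BᵀX`. Conditional independence of `Y` and `X` given `Z` says that the conditional
law of `Y` given `X = x` is, for almost every `x`, the conditional law of `Y` given `Z` taken at
`Bᵀx`. Hence `f_τ(X)` is almost surely the expectile of a kernel evaluated at `Z`, and it remains
to see that the expectile of `κ z` depends measurably on `z`. The risk `b ↦ ∫ φ_τ(y - b) dν` is
convex, so its strict minimizer `a` satisfies `a < t` iff some rational `q < t` has smaller risk
than `t`; this is a countable condition on the measurable maps `z ↦ ∫ φ_τ(y - b) κ z (dy)`.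
Finally, a function of `Z` is conditionally independent of anything given `Z`.
-/

open Set

section Loss

variable {τ : ℝ}

lemma phiLoss_eq_mul_max_sq (τ c : ℝ) :
    phiLoss τ c = τ * max c 0 ^ 2 + (1 - τ) * max (-c) 0 ^ 2 := by
  unfold phiLoss
  split_ifs with hc
  · rw [max_eq_right hc, max_eq_left (neg_nonneg.2 hc)]; ring
  · rw [not_le] at hc
    rw [max_eq_left hc.le, max_eq_right (neg_nonpos.2 hc.le)]; ring

lemma convexOn_phiLoss (hτ0 : 0 ≤ τ) (hτ1 : τ ≤ 1) : ConvexOn ℝ univ (phiLoss τ) := by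
  have hpos : ConvexOn ℝ univ fun c : ℝ => max c 0 ^ 2 :=
    (convexOn_id convex_univ).sup (convexOn_const 0 convex_univ) |>.pow
      (fun c _ => le_max_right c 0) 2
  have hneg : ConvexOn ℝ univ fun c : ℝ => max (-c) 0 ^ 2 :=
    ((concaveOn_id convex_univ).neg.sup (convexOn_const 0 convex_univ)).pow
      (fun c _ => le_max_right (-c) 0) 2
  rw [show phiLoss τ = fun c => τ • max c 0 ^ 2 + (1 - τ) • max (-c) 0 ^ 2 from
    funext (phiLoss_eq_mul_max_sq τ)]
  exact (hpos.smul hτ0).add (hneg.smul (sub_nonneg.2 hτ1))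

lemma phiLoss_le_sq (hτ0 : 0 ≤ τ) (hτ1 : τ ≤ 1) (c : ℝ) : phiLoss τ c ≤ c ^ 2 := by
  unfold phiLoss; split_ifs <;> nlinarith [sq_nonneg c]

lemma min_mul_sq_le_phiLoss (c : ℝ) : min τ (1 - τ) * c ^ 2 ≤ phiLoss τ c := by
  unfold phiLoss; split_ifs
  · exact mul_le_mul_of_nonneg_right (min_le_right _ _) (sq_nonneg c)
  · exact mul_le_mul_of_nonneg_right (min_le_left _ _) (sq_nonneg c)

@[fun_prop]
lemma measurable_phiLoss : Measurable (phiLoss τ) :=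
  Measurable.ite measurableSet_Iic (by fun_prop) (by fun_prop)

end Loss

lemma ConvexOn.lt_iff_exists_rat_lt_and_lt {f : ℝ → ℝ} (hf : ConvexOn ℝ univ f) {a : ℝ}
    (ha : ∀ b ≠ a, f a < f b) (t : ℝ) : a < t ↔ ∃ q : ℚ, (q : ℝ) < t ∧ f q < f t := by
  constructor
  · intro hat
    obtain ⟨q, haq, hqt⟩ := exists_rat_btwn hat
    refine ⟨q, hqt, lt_of_not_ge fun htq => ?_⟩
    have hslope := hf.slope_mono_adjacent (mem_univ a) (mem_univ t) haq hqt
    have hleft : 0 < (f q - f a) / (q - a) :=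
      div_pos (sub_pos.2 (ha q haq.ne')) (sub_pos.2 haq)
    have hright : (f t - f q) / (t - q) ≤ 0 :=
      div_nonpos_of_nonpos_of_nonneg (sub_nonpos.2 htq) (sub_pos.2 hqt).le
    linarith
  · rintro ⟨q, hqt, hlt⟩
    by_contra! hta
    rcases hta.eq_or_lt with rfl | hta
    · exact (ha q hqt.ne).asymm hlt
    · have hslope := hf.slope_mono_adjacent (mem_univ (q : ℝ)) (mem_univ a) hqt hta
      have hleft : 0 < (f t - f q) / (t - q) := div_pos (sub_pos.2 hlt) (sub_pos.2 hqt)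
      have hright : (f a - f t) / (a - t) < 0 :=
        div_neg_of_neg_of_pos (sub_neg.2 (ha t hta.ne)) (sub_pos.2 hta)
      linarith

lemma exists_measurable_eq_of_forall_mem_iff_lt {γ : Type*} [MeasurableSpace γ] {A : ℚ → Set γ}
    (hA : ∀ q, MeasurableSet (A q)) :
    ∃ g : γ → ℝ, Measurable g ∧ ∀ z (a : ℝ), (∀ q : ℚ, z ∈ A q ↔ a < q) → g z = a := by
  classical
  refine ⟨fun z => (⨅ q : ℚ, if z ∈ A q then ((q : ℝ) : EReal) else ⊤).toReal,
    (Measurable.iInf fun q => Measurable.ite (hA q) measurable_const measurable_const).ereal_toReal,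
    fun z a hz => ?_⟩
  suffices (⨅ q : ℚ, if z ∈ A q then ((q : ℝ) : EReal) else ⊤) = (a : EReal) by simp [this]
  simp_rw [hz]
  refine le_antisymm (le_of_forall_gt fun c hc => ?_) (le_iInf fun q => ?_)
  · obtain ⟨q, haq, hqc⟩ := EReal.lt_iff_exists_rat_btwn.1 hc
    refine (iInf_le _ q).trans_lt ?_
    rwa [if_pos (by exact_mod_cast haq)]
  · split_ifs with h
    · exact_mod_cast h.le
    · exact le_top

noncomputable def expectileRisk (τ : ℝ) (ν : Measure ℝ) (b : ℝ) : ℝ :=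
  ∫ y, phiLoss τ (y - b) ∂ν

section Risk

variable {τ : ℝ} {ν : Measure ℝ} [IsFiniteMeasure ν] {a : ℝ}

lemma integrable_phiLoss_sub_iff (hτ0 : 0 < τ) (hτ1 : τ < 1) (b : ℝ) :
    Integrable (fun y => phiLoss τ (y - b)) ν ↔ MemLp id 2 ν := by
  have hm : 0 < min τ (1 - τ) := lt_min hτ0 (sub_pos.2 hτ1)
  have hsq : Integrable (fun y => phiLoss τ (y - b)) ν ↔ Integrable (fun y => (y - b) ^ 2) ν := by
    refine ⟨fun h => (h.const_mul (min τ (1 - τ))⁻¹).mono' (by fun_prop) (ae_of_all _ fun y => ?_),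
      fun h => h.mono' (by fun_prop : Measurable fun y => phiLoss τ (y - b)).aestronglyMeasurable
        (ae_of_all _ fun y => ?_)⟩
    · rw [Real.norm_of_nonneg (sq_nonneg _), inv_mul_eq_div, le_div_iff₀' hm]
      exact min_mul_sq_le_phiLoss _
    · rw [Real.norm_of_nonneg ((mul_nonneg hm.le (sq_nonneg _)).trans (min_mul_sq_le_phiLoss _))]
      exact phiLoss_le_sq hτ0.le hτ1.le _
  rw [hsq, ← memLp_two_iff_integrable_sq (by fun_prop)]
  refine ⟨fun h => ?_, fun h => h.sub (memLp_const b)⟩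
  convert h.add (memLp_const b) using 1
  ext y
  simp

lemma IsExpectile.memLp (hτ0 : 0 < τ) (hτ1 : τ < 1) (h : IsExpectile τ ν a) : MemLp id 2 ν := by
  by_contra hν
  -- otherwise every risk is the junk value `0` of a non-integrable integral
  have hzero (b : ℝ) : ∫ y, phiLoss τ (y - b) ∂ν = 0 :=
    integral_undef (mt (integrable_phiLoss_sub_iff hτ0 hτ1 b).1 hν)
  simpa [hzero] using h (a + 1) (by simp)

lemma convexOn_expectileRisk (hτ0 : 0 < τ) (hτ1 : τ < 1) (hν : MemLp id 2 ν) :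
    ConvexOn ℝ univ (expectileRisk τ ν) := by
  refine ⟨convex_univ, fun a _ b _ s t hs ht hst => ?_⟩
  have hint (c : ℝ) := (integrable_phiLoss_sub_iff (ν := ν) hτ0 hτ1 c).2 hν
  simp only [expectileRisk, smul_eq_mul]
  rw [← integral_const_mul, ← integral_const_mul,
    ← integral_add ((hint a).const_mul s) ((hint b).const_mul t)]
  refine integral_mono (hint _) (((hint a).const_mul s).add ((hint b).const_mul t)) fun y => ?_
  have hy : y - (s * a + t * b) = s * (y - a) + t * (y - b) := by linear_combination (-y) * hst
  simpa only [hy, smul_eq_mul] using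
    (convexOn_phiLoss hτ0.le hτ1.le).2 (mem_univ (y - a)) (mem_univ (y - b)) hs ht hst

lemma IsExpectile.lt_iff_exists_rat (hτ0 : 0 < τ) (hτ1 : τ < 1) (h : IsExpectile τ ν a)
    (t : ℝ) : a < t ↔ ∃ q : ℚ, (q : ℝ) < t ∧ expectileRisk τ ν q < expectileRisk τ ν t :=
  (convexOn_expectileRisk hτ0 hτ1 (h.memLp hτ0 hτ1)).lt_iff_exists_rat_lt_and_lt h t

lemma measurable_expectileRisk {γ : Type*} [MeasurableSpace γ] (κ : Kernel γ ℝ) (b : ℝ) :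
    Measurable fun z => expectileRisk τ (κ z) b :=
  (StronglyMeasurable.integral_kernel
    (by fun_prop : Measurable fun y => phiLoss τ (y - b)).stronglyMeasurable).measurable

end Risk

lemma exists_measurable_isExpectile {τ : ℝ} (hτ0 : 0 < τ) (hτ1 : τ < 1) {γ : Type*}
    [MeasurableSpace γ] (κ : Kernel γ ℝ) [IsFiniteKernel κ] :
    ∃ g : γ → ℝ, Measurable g ∧ ∀ z a, IsExpectile τ (κ z) a → g z = a := by
  obtain ⟨g, hg, hga⟩ := exists_measurable_eq_of_forall_mem_iff_lt (A := fun q : ℚ =>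
    {z | ∃ r : ℚ, (r : ℝ) < q ∧ expectileRisk τ (κ z) r < expectileRisk τ (κ z) q})
    fun q => by
      simp only [ofPred_exists, ofPred_and]
      exact .iUnion fun r => (MeasurableSet.const _).inter
        (measurableSet_lt (measurable_expectileRisk κ r) (measurable_expectileRisk κ q))
  exact ⟨g, hg, fun z a ha => hga z a fun q => (ha.lt_iff_exists_rat hτ0 hτ1 q).symm⟩

section CondIndep

variable {Ω β γ : Type*} {m mΩ : MeasurableSpace Ω} [StandardBorelSpace Ω] {μ : Measure Ω}
  [IsFiniteMeasure μ] {mβ : MeasurableSpace β} {mγ : MeasurableSpace γ}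

lemma CondIndepFun.congr_left {hm : m ≤ mΩ} {f f' : Ω → β} {g : Ω → γ}
    (hfg : CondIndepFun m hm f g μ) (hff' : f =ᵐ[μ] f') : CondIndepFun m hm f' g μ := by
  have hae : ∀ᵐ ω ∂(condExpKernel μ m ∘ₘ μ.trim hm), f ω = f' ω := by
    rwa [condExpKernel_comp_trim hm]
  exact Kernel.IndepFun.congr' hfg (Measure.ae_ae_of_ae_comp hae)
    (ae_of_all _ fun _ => .rfl)

lemma condDistrib_ae_eq_comap_of_condIndepFun [StandardBorelSpace β] [Nonempty β] {Y : Ω → ℝ}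
    {X : Ω → β} {h : β → γ} (hY : Measurable Y) (hX : Measurable X) (hh : Measurable h)
    (hYX : Y ⟂ᵢ[h ∘ X, hh.comp hX; μ] X) :
    condDistrib Y X μ =ᵐ[μ.map X] (condDistrib Y (h ∘ X) μ).comap h hh := by
  have hjoint := (condIndepFun_iff_condDistrib_prod_ae_eq_prodMkRight hY hX (hh.comp hX)).1
    hYX.symm
  rw [condDistrib_ae_eq_iff_measure_eq_compProd _ hY.aemeasurable] at hjoint
  refine condDistrib_ae_eq_of_measure_eq_compProd X hY.aemeasurable
    (Measure.ext_prod fun {s t} hs ht => ?_)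
  have hst := congr($hjoint ((univ ×ˢ s) ×ˢ t))
  have hus : MeasurableSet ((univ : Set γ) ×ˢ s) := MeasurableSet.univ.prod hs
  rw [Measure.map_apply (by fun_prop) (hus.prod ht), Measure.compProd_apply_prod hus ht,
    setLIntegral_map hus (Kernel.measurable_coe _ ht) (by fun_prop)] at hst
  rw [Measure.map_apply (by fun_prop) (hs.prod ht), Measure.compProd_apply_prod hs ht,
    setLIntegral_map hs (Kernel.measurable_coe _ ht) hX]
  convert hst using 2 <;> simp [preimage]

end CondIndep

theorem statement2_general
    {Ω : Type*} [mΩ : MeasurableSpace Ω] [StandardBorelSpace Ω]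
    (P : Measure Ω) [IsProbabilityMeasure P]
    {p d : ℕ}
    (X : Ω → Fin p → ℝ) (hXmeas : Measurable X)
    (Y : Ω → ℝ) (hYmeas : Measurable Y)
    (B : Matrix (Fin p) (Fin d) ℝ)
    (hm : MeasurableSpace.comap (fun ω => Bᵀ.mulVec (X ω)) inferInstance ≤ mΩ)
    (hYX : CondIndepFun (MeasurableSpace.comap (fun ω => Bᵀ.mulVec (X ω)) inferInstance) hm
      Y X P)
    (τ : ℝ) (hτ0 : 0 < τ) (hτ1 : τ < 1)
    (f : (Fin p → ℝ) → ℝ)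
    (hexp : ∀ᵐ x ∂(P.map X), IsExpectile τ (condDistrib Y X P x) (f x)) :
    CondIndepFun (MeasurableSpace.comap (fun ω => Bᵀ.mulVec (X ω)) inferInstance) hm
      (fun ω => f (X ω)) X P := by
  have hB : Measurable fun v : Fin p → ℝ => Bᵀ *ᵥ v :=
    (Continuous.matrix_mulVec continuous_const continuous_id).measurable
  obtain ⟨g, hg, hg_eq⟩ :=
    exists_measurable_isExpectile hτ0 hτ1 (condDistrib Y (fun ω => Bᵀ *ᵥ X ω) P)
  have hcond := condDistrib_ae_eq_comap_of_condIndepFun hYmeas hXmeas hB hYX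
  have hfg : (fun ω => g (Bᵀ *ᵥ X ω)) =ᵐ[P] fun ω => f (X ω) := by
    refine ae_of_ae_map (p := fun x => g (Bᵀ *ᵥ x) = f x) hXmeas.aemeasurable ?_
    filter_upwards [hexp, hcond] with x hx hx_eq
    rw [hx_eq, Kernel.comap_apply] at hx
    exact hg_eq _ _ hx
  exact CondIndepFun.congr_left
    (condIndepFun_of_measurable_left (hg.comp (comap_measurable _)) hXmeas) hfg

/-- If `Y ⫫ X | BᵀX`, then for each fixed `0 < τ < 1` the conditional expectile `f_τ(X)`
is conditionally independent of `X` given `BᵀX`. -/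
theorem statement2
    {Ω : Type*} [mΩ : MeasurableSpace Ω] [StandardBorelSpace Ω] [Nonempty Ω]
    (P : Measure Ω) [IsProbabilityMeasure P]
    {p d : ℕ}
    (X : Ω → Fin p → ℝ) (hXmeas : Measurable X) (hX2 : MemLp X 2 P)
    (Y : Ω → ℝ) (hYmeas : Measurable Y) (hY2 : MemLp Y 2 P)
    (B : Matrix (Fin p) (Fin d) ℝ) (hBrank : B.rank = d)
    (hm : MeasurableSpace.comap (fun ω => Bᵀ.mulVec (X ω)) inferInstance ≤ mΩ)
    (hYX : CondIndepFun (MeasurableSpace.comap (fun ω => Bᵀ.mulVec (X ω)) inferInstance) hm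
      Y X P)
    (τ : ℝ) (hτ0 : 0 < τ) (hτ1 : τ < 1)
    (f : (Fin p → ℝ) → ℝ) (hfmeas : Measurable f)
    (hexp : ∀ᵐ x ∂(P.map X), IsExpectile τ (condDistrib Y X P x) (f x)) :
    CondIndepFun (MeasurableSpace.comap (fun ω => Bᵀ.mulVec (X ω)) inferInstance) hm
      (fun ω => f (X ω)) X P :=
  statement2_general (mΩ := mΩ) P X hXmeas Y hYmeas B hm hYX τ hτ0 hτ1 f hexp
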